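/- Let 0 < λ < μ and let M : (0,∞) → ℝ be a bounded function satisfying the functional equation M(z) = q(z)·M(h(z)) + L(z) for every z > 0. Then for every z > 0 the series Σ_{k=0}^{∞} (Π_{ℓ=0}^{k-1} q(h^{(ℓ)}(z)))·L(h^{(k)}(z)) converges (here h^{(k)} denotes the k-th iterate of h and the empty product for k = 0 equals 1) and its sum equals M(z). -/
import Mathlib


noncomputable section

/-- The quadratic discriminant `D(s)` of the symmetric SQF model. -/
def Dq (lam mu s : ℝ) : ℝ :=
  (mu ^ 2 - lam * mu / 2 + (mu - lam) * s) ^ 2 + 2 * lam * mu * s * (mu + s)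

/-- The branch `ξ⁺(s)` of the quadratic `(s+μ)ξ² + (μ²-λμ/2+(μ-λ)s)ξ - λμs/2 = 0`. -/
def xiPlus (lam mu s : ℝ) : ℝ :=
  (-(mu ^ 2 - lam * mu / 2 + (mu - lam) * s) + Real.sqrt (Dq lam mu s)) / (2 * (s + mu))

/-- The branch `ξ⁻(s)` of the quadratic `(s+μ)ξ² + (μ²-λμ/2+(μ-λ)s)ξ - λμs/2 = 0`. -/
def xiMinus (lam mu s : ℝ) : ℝ :=
  (-(mu ^ 2 - lam * mu / 2 + (mu - lam) * s) - Real.sqrt (Dq lam mu s)) / (2 * (s + mu))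

/-- The key cubic polynomial `R(w,z)` of the symmetric SQF model. -/
def Rcub (lam mu w z : ℝ) : ℝ :=
  w ^ 3 - (lam - z) * w ^ 2 - (z + mu) ^ 2 * w - z * (z + mu) * (z + mu - lam)

/-- `s(z) = z - α(z)`, given the branch `α` of the cubic. -/
def sfun (alpha : ℝ → ℝ) (z : ℝ) : ℝ := z - alpha z

/-- `h(z) = (s(z) + ξ⁺(s(z)))/2`, given the branch `α` of the cubic. -/
def hfun (lam mu : ℝ) (alpha : ℝ → ℝ) (z : ℝ) : ℝ :=
  (sfun alpha z + xiPlus lam mu (sfun alpha z)) / 2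

/-- `q(z) = (μ + ξ⁻)/(μ + ξ⁺(s(z)))` where `ξ⁻ = z + α(z)`. -/
def qfun (lam mu : ℝ) (alpha : ℝ → ℝ) (z : ℝ) : ℝ :=
  (mu + (z + alpha z)) / (mu + xiPlus lam mu (sfun alpha z))

/-- `L(z) = (1-λ/μ)·s(z)·(ξ⁺(s(z)) - ξ⁻)/((s(z)-ξ⁺(s(z)))·(s(z)-ξ⁻))·(μ+ξ⁻)/μ`
where `ξ⁻ = z + α(z)`. -/
def Lfun (lam mu : ℝ) (alpha : ℝ → ℝ) (z : ℝ) : ℝ :=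
  (1 - lam / mu) * sfun alpha z * (xiPlus lam mu (sfun alpha z) - (z + alpha z)) /
      ((sfun alpha z - xiPlus lam mu (sfun alpha z)) * (sfun alpha z - (z + alpha z))) *
    (mu + (z + alpha z)) / mu

lemma xiPlus_lb {lam mu s : ℝ} (hlam : 0 < lam) (hmu : lam < mu) (hs : 0 < s) :
    lam * s / (3 * (s + mu)) ≤ xiPlus lam mu s := by
  have hmu0 : 0 < mu := hlam.trans hmu
  have hsmu : 0 < s + mu := by linarith
  have key : ∀ b r : ℝ, 0 < b → b ≤ mu * (s + mu) → b ≤ r → r ≤ 2 * mu * (s + mu) →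
      r ^ 2 = b ^ 2 + 2 * lam * mu * s * (mu + s) →
      lam * s / (3 * (s + mu)) ≤ (-b + r) / (2 * (s + mu)) := by
    intro b r hb hbm hbr hrm hr2
    have hX : (r - b) * (r + b) = 2 * lam * mu * s * (mu + s) := by nlinarith [hr2]
    have hsum : r + b ≤ 3 * mu * (s + mu) := by linarith
    have hkey : 2 * lam * s ≤ 3 * (r - b) := by
      nlinarith [mul_le_mul_of_nonneg_left hsum (sub_nonneg.2 hbr),
        mul_pos hmu0 hsmu, mul_pos hlam hs]
    rw [div_le_div_iff₀ (by positivity) (by positivity)]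
    nlinarith [mul_le_mul_of_nonneg_right hkey hsmu.le]
  have hb0 : 0 < mu ^ 2 - lam * mu / 2 + (mu - lam) * s := by
    nlinarith [mul_lt_mul_of_pos_right hmu hmu0, mul_pos (sub_pos.2 hmu) hs]
  have hbm : mu ^ 2 - lam * mu / 2 + (mu - lam) * s ≤ mu * (s + mu) := by
    nlinarith [mul_pos hlam hmu0, mul_pos hlam hs]
  have hD0 : 0 ≤ Dq lam mu s := by
    unfold Dq
    nlinarith [sq_nonneg (mu ^ 2 - lam * mu / 2 + (mu - lam) * s),
      mul_pos (mul_pos (mul_pos hlam hmu0) hs) hsmu]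
  have hsq : Real.sqrt (Dq lam mu s) ^ 2 = Dq lam mu s := Real.sq_sqrt hD0
  have hge : mu ^ 2 - lam * mu / 2 + (mu - lam) * s ≤ Real.sqrt (Dq lam mu s) := by
    rw [show mu ^ 2 - lam * mu / 2 + (mu - lam) * s
        = Real.sqrt ((mu ^ 2 - lam * mu / 2 + (mu - lam) * s) ^ 2) from
      (Real.sqrt_sq hb0.le).symm]
    apply Real.sqrt_le_sqrt
    unfold Dq
    nlinarith [mul_pos (mul_pos (mul_pos hlam hmu0) hs) hsmu]
  have hle : Real.sqrt (Dq lam mu s) ≤ 2 * mu * (s + mu) := by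
    have h2 : Dq lam mu s ≤ (2 * mu * (s + mu)) ^ 2 := by
      unfold Dq
      nlinarith [mul_le_mul hbm hbm hb0.le (by positivity), mul_pos hmu0 hsmu,
        mul_pos hlam hs, mul_pos (sub_pos.2 hmu) hs, mul_pos hmu0 hs]
    calc Real.sqrt (Dq lam mu s) ≤ Real.sqrt ((2 * mu * (s + mu)) ^ 2) :=
          Real.sqrt_le_sqrt h2
      _ = 2 * mu * (s + mu) := Real.sqrt_sq (by positivity)
  have := key (mu ^ 2 - lam * mu / 2 + (mu - lam) * s) (Real.sqrt (Dq lam mu s))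
    hb0 hbm hge hle (by rw [hsq]; unfold Dq; ring)
  exact this

lemma xiPlus_pos {lam mu s : ℝ} (hlam : 0 < lam) (hmu : lam < mu) (hs : 0 < s) :
    0 < xiPlus lam mu s := by
  have hmu0 : 0 < mu := hlam.trans hmu
  have h1 : 0 < lam * s / (3 * (s + mu)) := by
    have : 0 < s + mu := by linarith
    positivity
  linarith [xiPlus_lb hlam hmu hs]

theorem stmt_15 (lam mu : ℝ) (hlam : 0 < lam) (hmu : lam < mu)
    (alpha : ℝ → ℝ)
    (halpha : ∀ z : ℝ, 0 < z → Rcub lam mu (alpha z) z = 0 ∧ alpha z < -z ∧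
      ∀ w : ℝ, Rcub lam mu w z = 0 → w < -z → w = alpha z)
    (M : ℝ → ℝ)
    (hbdd : ∃ C : ℝ, ∀ z : ℝ, 0 < z → |M z| ≤ C)
    (hfeq : ∀ z : ℝ, 0 < z →
      M z = qfun lam mu alpha z * M (hfun lam mu alpha z) + Lfun lam mu alpha z) :
    ∀ z : ℝ, 0 < z →
      Filter.Tendsto
        (fun K : ℕ => ∑ k ∈ Finset.range K,
          (∏ l ∈ Finset.range k, qfun lam mu alpha ((hfun lam mu alpha)^[l] z)) *
            Lfun lam mu alpha ((hfun lam mu alpha)^[k] z))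
        Filter.atTop (nhds (M z)) := by
  have hmu0 : 0 < mu := hlam.trans hmu
  -- bounds on alpha
  have hAB : ∀ w : ℝ, 0 < w → -(w + mu) < alpha w ∧ alpha w < -w := by
    intro w hw
    obtain ⟨hroot, hlt, huniq⟩ := halpha w hw
    refine ⟨?_, hlt⟩
    have hcont : ContinuousOn (fun x => Rcub lam mu x w) (Set.Icc (-(w + mu)) (-w)) := by
      apply Continuous.continuousOn
      unfold Rcub; fun_prop
    have hfa : Rcub lam mu (-(w + mu)) w = -(lam * mu * (w + mu)) := by unfold Rcub; ring
    have hfb : Rcub lam mu (-w) w = lam * mu * w := by unfold Rcub; ring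
    have h0 : (0 : ℝ) ∈ Set.Ioo (Rcub lam mu (-(w + mu)) w) (Rcub lam mu (-w) w) := by
      rw [hfa, hfb]
      constructor
      · have : 0 < lam * mu * (w + mu) := by positivity
        linarith
      · positivity
    obtain ⟨x, hx, hfx⟩ := intermediate_value_Ioo (by linarith : -(w + mu) ≤ -w) hcont h0
    have hxeq := huniq x hfx hx.2
    have := hx.1
    rw [hxeq] at this
    exact this
  intro z hz
  set h := hfun lam mu alpha with hh
  have hs2 : ∀ w : ℝ, 0 < w → 2 * w < sfun alpha w := by
    intro w hw
    have := (hAB w hw).2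
    unfold sfun; linarith
  have hstep : ∀ w : ℝ, 0 < w → w < h w := by
    intro w hw
    have hs := hs2 w hw
    have hsp : 0 < sfun alpha w := by linarith
    have := xiPlus_pos hlam hmu hsp
    rw [hh]; unfold hfun; linarith
  have horb : ∀ k : ℕ, z ≤ h^[k] z := by
    intro k
    induction k with
    | zero => simp
    | succ n ih =>
      rw [Function.iterate_succ_apply']
      have hp : 0 < h^[n] z := lt_of_lt_of_le hz ih
      linarith [hstep _ hp]
  set eps := lam * (2 * z) / (3 * (2 * z + mu)) with heps
  have heps0 : 0 < eps := by
    rw [heps]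
    have : (0:ℝ) < 2 * z + mu := by linarith
    positivity
  set c := mu / (mu + eps) with hc
  have hc0 : 0 ≤ c := by rw [hc]; positivity
  have hc1 : c < 1 := by
    rw [hc, div_lt_one (by linarith)]; linarith
  have hqb : ∀ w : ℝ, z ≤ w → 0 ≤ qfun lam mu alpha w ∧ qfun lam mu alpha w ≤ c := by
    intro w hwz
    have hw : 0 < w := lt_of_lt_of_le hz hwz
    have hsw := hs2 w hw
    have hsp : 0 < sfun alpha w := by linarith
    have hxi := xiPlus_lb hlam hmu hsp
    have hxi2 : eps ≤ xiPlus lam mu (sfun alpha w) := by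
      refine le_trans ?_ hxi
      rw [heps, div_le_div_iff₀ (by linarith) (by linarith)]
      have hge : 2 * z ≤ sfun alpha w := by linarith
      nlinarith [mul_nonneg (mul_nonneg hlam.le (sub_nonneg.2 hge)) hmu0.le]
    have hnum := hAB w hw
    have hn0 : 0 < mu + (w + alpha w) := by linarith [hnum.1]
    have hn1 : mu + (w + alpha w) < mu := by linarith [hnum.2]
    have hd : 0 < mu + xiPlus lam mu (sfun alpha w) := by linarith
    constructor
    · unfold qfun; positivity
    · unfold qfun
      rw [hc, div_le_div_iff₀ hd (by linarith)]
      nlinarith [mul_le_mul_of_nonneg_left hxi2 hmu0.le,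
        mul_le_mul_of_nonneg_right hn1.le (by linarith : (0:ℝ) ≤ mu + eps)]
  set P : ℕ → ℝ := fun k => ∏ l ∈ Finset.range k, qfun lam mu alpha (h^[l] z) with hP
  have tel : ∀ K : ℕ, M z =
      (∑ k ∈ Finset.range K, P k * Lfun lam mu alpha (h^[k] z)) + P K * M (h^[K] z) := by
    intro K
    induction K with
    | zero => simp [hP]
    | succ n ih =>
      have hpos : 0 < h^[n] z := lt_of_lt_of_le hz (horb n)
      have hf := hfeq (h^[n] z) hpos
      have hP1 : P (n + 1) = P n * qfun lam mu alpha (h^[n] z) := by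
        rw [hP]; exact Finset.prod_range_succ _ _
      rw [Finset.sum_range_succ, hP1, Function.iterate_succ_apply', ih, hf]
      ring
  obtain ⟨C, hC⟩ := hbdd
  have hPb : ∀ K : ℕ, |P K| ≤ c ^ K := by
    intro K
    have h1 : 0 ≤ P K := by
      rw [hP]
      exact Finset.prod_nonneg fun l _ => (hqb _ (horb l)).1
    rw [abs_of_nonneg h1, hP]
    calc (∏ l ∈ Finset.range K, qfun lam mu alpha (h^[l] z))
        ≤ ∏ l ∈ Finset.range K, c :=
          Finset.prod_le_prod (fun l _ => (hqb _ (horb l)).1) (fun l _ => (hqb _ (horb l)).2)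
      _ = c ^ K := by rw [Finset.prod_const, Finset.card_range]
  have hrem : Filter.Tendsto (fun K : ℕ => P K * M (h^[K] z)) Filter.atTop (nhds 0) := by
    apply squeeze_zero_norm (a := fun K : ℕ => c ^ K * C)
    · intro K
      rw [Real.norm_eq_abs, abs_mul]
      have hMb := hC _ (lt_of_lt_of_le hz (horb K))
      exact mul_le_mul (hPb K) hMb (abs_nonneg _) (by positivity)
    · have := (tendsto_pow_atTop_nhds_zero_of_lt_one hc0 hc1).mul_const C
      simpa using this
  have hlim : Filter.Tendsto (fun K : ℕ => M z - P K * M (h^[K] z)) Filter.atTop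
      (nhds (M z - 0)) := tendsto_const_nhds.sub hrem
  rw [sub_zero] at hlim
  refine hlim.congr fun K => ?_
  have htel := tel K
  simp only [hP] at htel ⊢
  linarith [htel]
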